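/- For every integer ℓ with 1 ≤ ℓ < ℓ*, the following three conditions are equivalent: (i) the graph of G¹_ℓ sticks out below the minimal support line at slope v_ℓ*, i.e. there exists a ∈ [4(ℓ−1), ℓw] with G¹_ℓ(a) < G²_ℓ(a_ℓ⁻) − v_ℓ*·(a_ℓ⁻ − a); (ii) v_ℓ* < 1 + ℓw/σ; (iii) G²_{ℓ−1}(a) > G²_ℓ(ℓw) − (ℓw − a)·(1 + ℓw/σ) for every a ∈ [(ℓ−1)w, 4(ℓ−1)] (for ℓ = 1 this reads 0 > G²_1(w) − w·(1 + w/σ)). -/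
import Mathlib


/-- Surface tension of the type-2 stack of `ℓ` layers and area `a`:
`τ²_ℓ(a) = 8ℓ − 2√((4ℓ−a)(4−w)ℓ)`. -/
noncomputable def tau2 (w : ℝ) (ℓ : ℕ) (a : ℝ) : ℝ :=
  8 * (ℓ : ℝ) - 2 * Real.sqrt ((4 * (ℓ : ℝ) - a) * ((4 - w) * (ℓ : ℝ)))

/-- `G²_ℓ(a) = τ²_ℓ(a) + a²/(2σ)` (the finite branch).  Note that `G²_0(0) = 0`. -/
noncomputable def G2 (w σ : ℝ) (ℓ : ℕ) (a : ℝ) : ℝ :=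
  tau2 w ℓ a + a ^ 2 / (2 * σ)

/-- Admissible pairs `(ℓ, a)` for the type-2 variational problem. -/
def Adm2 (w : ℝ) (p : ℕ × ℝ) : Prop :=
  (p.1 = 0 ∧ p.2 = 0) ∨ (1 ≤ p.1 ∧ (p.1 : ℝ) * w ≤ p.2 ∧ p.2 ≤ 4 * (p.1 : ℝ))

/-- The objective `F_v(ℓ, a) = −v·a + G²_ℓ(a)` of the type-2 variational problem. -/
noncomputable def F2 (w σ v : ℝ) (p : ℕ × ℝ) : ℝ :=
  -v * p.2 + G2 w σ p.1 p.2

lemma quartic_min (c₁ c₂ c₄ r : ℝ) (h4 : 0 ≤ c₄) (hr0 : 0 ≤ r) (hr1 : r ≤ 1)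
    (hend : c₁ + 2*c₂ + 4*c₄ ≤ 0) :
    min 0 (c₁ + c₂ + c₄) ≤ c₁*r + c₂*r^2 + c₄*r^4 := by
  rcases le_or_gt (c₁ + 2*c₂*r + 4*c₄*r^3) 0 with h | h
  · refine le_trans (min_le_right _ _) ?_
    nlinarith [mul_nonneg (mul_nonneg h4 (sq_nonneg (1-r))) (by nlinarith : (0:ℝ) ≤ 1 - r^2),
      mul_nonpos_of_nonneg_of_nonpos (by linarith : (0:ℝ) ≤ 1 - r) (by linarith : c₁ + 2*c₂*r + 4*c₄*r^3 + (c₁ + 2*c₂ + 4*c₄) ≤ 0)]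
  · refine le_trans (min_le_left _ _) ?_
    rcases eq_or_lt_of_le hr1 with rfl | hlt
    · nlinarith
    · have key : 2*(1-r)*(c₁*r + c₂*r^2 + c₄*r^4)
          = 2*r*(1-r)*(c₁ + 2*c₂*r + 4*c₄*r^3)
            + r^2*((c₁ + 2*c₂*r + 4*c₄*r^3) - (c₁ + 2*c₂ + 4*c₄))
            + 2*c₄*r^2*(1-r)*(2+2*r-r^2) := by ring
      have t1 : 0 ≤ 2*r*(1-r)*(c₁ + 2*c₂*r + 4*c₄*r^3) := by
        have : 0 ≤ 2*r*(1-r) := by nlinarith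
        exact mul_nonneg this h.le
      have t2 : 0 ≤ r^2*((c₁ + 2*c₂*r + 4*c₄*r^3) - (c₁ + 2*c₂ + 4*c₄)) :=
        mul_nonneg (sq_nonneg r) (by linarith)
      have t3 : 0 ≤ 2*c₄*r^2*(1-r)*(2+2*r-r^2) := by
        have h1 : 0 ≤ 2*c₄*r^2*(1-r) := by nlinarith [mul_nonneg h4 (sq_nonneg r)]
        have hq : (0:ℝ) ≤ 2+2*r-r^2 := by nlinarith [mul_nonneg hr0 (sub_nonneg.2 hr1)]
        exact mul_nonneg h1 hq
      nlinarith [sub_pos.2 hlt, t1, t2, t3, key]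

lemma quartic_pick (c₁ c₂ c₄ : ℝ) (h4 : 0 ≤ c₄) (hD : 0 < c₁ + 2*c₂ + 4*c₄) :
    ∃ r, 0 ≤ r ∧ r < 1 ∧ c₁*r + c₂*r^2 + c₄*r^4 < c₁ + c₂ + c₄ := by
  set D := c₁ + 2*c₂ + 4*c₄ with hDdef
  set E := |c₂| + 6*c₄ + 1 with hEdef
  have hE : 0 < E := by positivity
  set ε := min 1 (D/E) with hεdef
  have hε0 : 0 < ε := lt_min one_pos (div_pos hD hE)
  have hε1 : ε ≤ 1 := min_le_left _ _
  have hεE : ε * E ≤ D := by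
    have := min_le_right 1 (D/E)
    calc ε * E ≤ (D/E) * E := by nlinarith
    _ = D := by field_simp
  refine ⟨1 - ε, by linarith, by linarith, ?_⟩
  have h1 : c₂ + c₄*(6 - 4*ε + ε^2) ≤ |c₂| + 6*c₄ := by
    nlinarith [le_abs_self c₂, mul_nonneg (mul_nonneg h4 hε0.le) (by linarith : (0:ℝ) ≤ 4 - ε)]
  have h2 : ε*(c₂ + c₄*(6 - 4*ε + ε^2)) ≤ ε*(|c₂| + 6*c₄) :=
    mul_le_mul_of_nonneg_left h1 hε0.le
  have h3 : ε*(|c₂| + 6*c₄) = ε*E - ε := by rw [hEdef]; ring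
  have h5 : ε*(c₂ + c₄*(6 - 4*ε + ε^2)) ≤ D - ε := by linarith
  have hkey : c₁ + c₂ + c₄ - (c₁*(1-ε) + c₂*(1-ε)^2 + c₄*(1-ε)^4)
      = ε*(D - ε*(c₂ + c₄*(6 - 4*ε + ε^2))) := by rw [hDdef]; ring
  nlinarith [mul_pos hε0 hε0]


set_option maxHeartbeats 2000000 in
/-- for `1 ≤ ℓ < ℓ*`, with `v_ℓ*` the critical slope at which both an
`(ℓ−1)`-layer and an `ℓ`-layer type-2 stack minimize `F_v`, and `a_ℓ⁻` the `ℓ`-layer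
minimizing area at `v_ℓ*`, the following are equivalent:
(i) the graph of `G¹_ℓ` sticks out below the support line at slope `v_ℓ*`;
(ii) `v_ℓ* < 1 + ℓw/σ`;
(iii) `G²_{ℓ−1}(a) > G²_ℓ(ℓw) − (ℓw − a)(1 + ℓw/σ)` for all `a ∈ [(ℓ−1)w, 4(ℓ−1)]`. -/
theorem sticks_out_iff (w σ : ℝ) (hw0 : 0 < w) (hw4 : w < 4) (hσ : 0 < σ)
    (hnd : ∀ n : ℕ, (n : ℝ) ≠ 4 / (4 - w))
    (ℓ : ℕ) (hℓ1 : 1 ≤ ℓ) (hℓstar : (ℓ : ℝ) < 4 / (4 - w))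
    (vℓ aℓm : ℝ)
    -- `(ℓ, a_ℓ⁻)` is an admissible type-2 minimizer at slope `v_ℓ*` …
    (hmin : Adm2 w (ℓ, aℓm) ∧ ∀ q, Adm2 w q → F2 w σ vℓ (ℓ, aℓm) ≤ F2 w σ vℓ q)
    -- … and some `(ℓ−1)`-layer stack also achieves the minimum at `v_ℓ*`
    (hcoex : ∃ a' : ℝ, Adm2 w (ℓ - 1, a') ∧
      ∀ q, Adm2 w q → F2 w σ vℓ (ℓ - 1, a') ≤ F2 w σ vℓ q) :
    ((∃ a ∈ Set.Icc (4 * ((ℓ : ℝ) - 1)) ((ℓ : ℝ) * w), ∃ r ∈ Set.Icc (0 : ℝ) 1,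
        ((ℓ : ℝ) - 1) * (4 - (4 - w) * r ^ 2) + w * r ^ 2 = a ∧
        ((ℓ : ℝ) - 1) * (8 - 2 * r * (4 - w)) + 2 * r * w + a ^ 2 / (2 * σ)
          < G2 w σ ℓ aℓm - vℓ * (aℓm - a))
      ↔ vℓ < 1 + (ℓ : ℝ) * w / σ) ∧
    (vℓ < 1 + (ℓ : ℝ) * w / σ ↔
      ∀ a ∈ Set.Icc (((ℓ : ℝ) - 1) * w) (4 * ((ℓ : ℝ) - 1)),
        G2 w σ ℓ ((ℓ : ℝ) * w) - ((ℓ : ℝ) * w - a) * (1 + (ℓ : ℝ) * w / σ)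
          < G2 w σ (ℓ - 1) a) := by
  obtain ⟨hadm, hminle⟩ := hmin
  obtain ⟨a', hadm', hminle'⟩ := hcoex
  have h4w : (0:ℝ) < 4 - w := by linarith
  have hℓR : (1:ℝ) ≤ (ℓ:ℝ) := by exact_mod_cast hℓ1
  have hσ' : (0:ℝ) < 2*σ := by linarith
  have hcast : ((ℓ-1 : ℕ) : ℝ) = (ℓ:ℝ) - 1 := by
    rw [Nat.cast_sub hℓ1]; norm_num
  have hΔ : 0 < (ℓ:ℝ)*w - 4*((ℓ:ℝ)-1) := by
    have h := (lt_div_iff₀ h4w).mp hℓstar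
    nlinarith
  have hk : (0:ℝ) ≤ (4-w)*(ℓ:ℝ) := by positivity
  have hG2lw : G2 w σ ℓ ((ℓ:ℝ)*w) = 2*((ℓ:ℝ)*w) + ((ℓ:ℝ)*w)^2/(2*σ) := by
    unfold G2 tau2
    have h1 : (4*(ℓ:ℝ) - (ℓ:ℝ)*w) = (4-w)*(ℓ:ℝ) := by ring
    rw [h1, Real.sqrt_mul_self hk]
    ring
  have hG2x0 : G2 w σ (ℓ-1) (4*((ℓ:ℝ)-1)) = 8*((ℓ:ℝ)-1) + (4*((ℓ:ℝ)-1))^2/(2*σ) := by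
    unfold G2 tau2
    rw [hcast]
    have h1 : (4*((ℓ:ℝ)-1) - 4*((ℓ:ℝ)-1)) * ((4-w)*((ℓ:ℝ)-1)) = 0 := by ring
    rw [h1, Real.sqrt_zero]
    ring
  have hAdmlw : Adm2 w (ℓ, (ℓ:ℝ)*w) :=
    Or.inr ⟨hℓ1, le_refl _, by show (ℓ:ℝ)*w ≤ 4*(ℓ:ℝ); nlinarith⟩
  have hAdmpred : ∀ a : ℝ, ((ℓ:ℝ)-1)*w ≤ a → a ≤ 4*((ℓ:ℝ)-1) → Adm2 w (ℓ-1, a) := by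
    intro a ha1 ha2
    rcases Nat.lt_or_ge ℓ 2 with h2 | h2
    · have hℓe : ℓ = 1 := by omega
      subst hℓe
      left
      norm_num at ha1 ha2 ⊢
      linarith
    · right
      refine ⟨by omega, ?_, ?_⟩ <;> simp only [hcast] <;> linarith
  have ha'bounds : ((ℓ:ℝ)-1)*w ≤ a' ∧ a' ≤ 4*((ℓ:ℝ)-1) := by
    rcases hadm' with ⟨h0, ha0⟩ | ⟨_, h1, h2⟩
    · have hℓe : ℓ = 1 := by omega
      subst hℓe
      simp only at ha0
      subst ha0
      norm_num
    · simp only [hcast] at h1 h2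
      exact ⟨h1, h2⟩
  have haℓm : (ℓ:ℝ)*w ≤ aℓm ∧ aℓm ≤ 4*(ℓ:ℝ) := by
    rcases hadm with ⟨h0, _⟩ | ⟨_, h1, h2⟩
    · omega
    · exact ⟨h1, h2⟩
  have hmin_lw : -vℓ*aℓm + G2 w σ ℓ aℓm ≤ -vℓ*((ℓ:ℝ)*w) + G2 w σ ℓ ((ℓ:ℝ)*w) :=
    hminle _ hAdmlw
  -- Step S1 : if vℓ < 1 + ℓw/σ then aℓm = ℓw
  have haeq : vℓ < 1 + (ℓ:ℝ)*w/σ → aℓm = (ℓ:ℝ)*w := by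
    intro hv
    by_contra hne
    have hlt : (ℓ:ℝ)*w < aℓm := lt_of_le_of_ne haℓm.1 (Ne.symm hne)
    set u := Real.sqrt (4*(ℓ:ℝ) - aℓm) with hu
    set t := Real.sqrt ((4-w)*(ℓ:ℝ)) with ht
    have hu2 : u^2 = 4*(ℓ:ℝ) - aℓm := Real.sq_sqrt (by linarith [haℓm.2])
    have ht2 : t^2 = (4-w)*(ℓ:ℝ) := Real.sq_sqrt hk
    have hmul : Real.sqrt ((4*(ℓ:ℝ) - aℓm) * ((4-w)*(ℓ:ℝ))) = u*t :=
      Real.sqrt_mul (by linarith [haℓm.2]) _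
    have hG2a : G2 w σ ℓ aℓm = 8*(ℓ:ℝ) - 2*(u*t) + aℓm^2/(2*σ) := by
      unfold G2 tau2
      rw [hmul]
    have hvσ : vℓ*σ < σ + (ℓ:ℝ)*w := by
      have := (mul_lt_mul_of_pos_right hv hσ)
      calc vℓ*σ < (1 + (ℓ:ℝ)*w/σ)*σ := this
      _ = σ + (ℓ:ℝ)*w := by field_simp
    have hNum : 0 < (2*σ)*(-vℓ*aℓm + 8*(ℓ:ℝ) - 2*(u*t) + vℓ*((ℓ:ℝ)*w) - 2*((ℓ:ℝ)*w))
        + aℓm^2 - ((ℓ:ℝ)*w)^2 := by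
      nlinarith [mul_nonneg hσ.le (sq_nonneg (t-u)), sq_nonneg (aℓm - (ℓ:ℝ)*w),
        mul_pos (sub_pos.2 hlt) (by linarith : (0:ℝ) < 2*σ + 2*((ℓ:ℝ)*w) - 2*(vℓ*σ))]
    have hgt : -vℓ*((ℓ:ℝ)*w) + G2 w σ ℓ ((ℓ:ℝ)*w) < -vℓ*aℓm + G2 w σ ℓ aℓm := by
      rw [hG2lw, hG2a]
      rw [← sub_pos]
      have hEq : (-vℓ*aℓm + (8*(ℓ:ℝ) - 2*(u*t) + aℓm^2/(2*σ)))
          - (-vℓ*((ℓ:ℝ)*w) + (2*((ℓ:ℝ)*w) + ((ℓ:ℝ)*w)^2/(2*σ)))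
          = ((2*σ)*(-vℓ*aℓm + 8*(ℓ:ℝ) - 2*(u*t) + vℓ*((ℓ:ℝ)*w) - 2*((ℓ:ℝ)*w))
            + aℓm^2 - ((ℓ:ℝ)*w)^2) / (2*σ) := by
        field_simp
        ring
      rw [hEq]
      exact div_pos hNum hσ'
    linarith
  have hσ0 : σ ≠ 0 := ne_of_gt hσ
  constructor
  · constructor
    · -- (i) → (ii)
      intro hi
      by_contra hv
      have hvs : 1 + (ℓ:ℝ)*w/σ ≤ vℓ := not_lt.mp hv
      obtain ⟨a, ⟨ha1, ha2⟩, r, ⟨hr0, hr1⟩, heq, hlt⟩ := hi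
      have haval : a = 4*((ℓ:ℝ)-1) + r^2*((ℓ:ℝ)*w - 4*((ℓ:ℝ)-1)) := by
        linear_combination (-1 : ℝ) * heq
      have hend : 2*((ℓ:ℝ)*w - 4*((ℓ:ℝ)-1))
            + 2*(((ℓ:ℝ)*w - 4*((ℓ:ℝ)-1))*(4*((ℓ:ℝ)-1)/σ - vℓ))
            + 4*(((ℓ:ℝ)*w - 4*((ℓ:ℝ)-1))^2/(2*σ)) ≤ 0 := by
        have hfact : 2*((ℓ:ℝ)*w - 4*((ℓ:ℝ)-1))
              + 2*(((ℓ:ℝ)*w - 4*((ℓ:ℝ)-1))*(4*((ℓ:ℝ)-1)/σ - vℓ))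
              + 4*(((ℓ:ℝ)*w - 4*((ℓ:ℝ)-1))^2/(2*σ))
            = (2*((ℓ:ℝ)*w - 4*((ℓ:ℝ)-1)))*((1 + (ℓ:ℝ)*w/σ) - vℓ) := by
          field_simp
          ring
        rw [hfact]
        exact mul_nonpos_of_nonneg_of_nonpos (by linarith) (by linarith)
      have hq := quartic_min (2*((ℓ:ℝ)*w - 4*((ℓ:ℝ)-1)))
        (((ℓ:ℝ)*w - 4*((ℓ:ℝ)-1))*(4*((ℓ:ℝ)-1)/σ - vℓ))
        (((ℓ:ℝ)*w - 4*((ℓ:ℝ)-1))^2/(2*σ)) r (by positivity) hr0 hr1 hend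
      have h0 : -vℓ*aℓm + G2 w σ ℓ aℓm
          ≤ -vℓ*(4*((ℓ:ℝ)-1)) + G2 w σ (ℓ-1) (4*((ℓ:ℝ)-1)) :=
        hminle _ (hAdmpred (4*((ℓ:ℝ)-1))
          (by nlinarith [mul_nonneg (by linarith : (0:ℝ) ≤ (ℓ:ℝ)-1) h4w.le]) (le_refl _))
      rw [hG2x0] at h0
      have h1 : -vℓ*aℓm + G2 w σ ℓ aℓm
          ≤ -vℓ*((ℓ:ℝ)*w) + (2*((ℓ:ℝ)*w) + ((ℓ:ℝ)*w)^2/(2*σ)) := by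
        have := hmin_lw
        rw [hG2lw] at this
        exact this
      have hid1 : (((ℓ:ℝ)-1)*(8-2*r*(4-w)) + 2*r*w + a^2/(2*σ))
            - (G2 w σ ℓ aℓm - vℓ*(aℓm - a))
          = ((-vℓ*(4*((ℓ:ℝ)-1)) + (8*((ℓ:ℝ)-1) + (4*((ℓ:ℝ)-1))^2/(2*σ)))
              - (-vℓ*aℓm + G2 w σ ℓ aℓm))
            + ((2*((ℓ:ℝ)*w - 4*((ℓ:ℝ)-1)))*r
              + (((ℓ:ℝ)*w - 4*((ℓ:ℝ)-1))*(4*((ℓ:ℝ)-1)/σ - vℓ))*r^2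
              + (((ℓ:ℝ)*w - 4*((ℓ:ℝ)-1))^2/(2*σ))*r^4) := by
        rw [haval]
        field_simp
        ring
      have hid2 : ((-vℓ*((ℓ:ℝ)*w) + (2*((ℓ:ℝ)*w) + ((ℓ:ℝ)*w)^2/(2*σ)))
              - (-vℓ*aℓm + G2 w σ ℓ aℓm))
          = ((-vℓ*(4*((ℓ:ℝ)-1)) + (8*((ℓ:ℝ)-1) + (4*((ℓ:ℝ)-1))^2/(2*σ)))
              - (-vℓ*aℓm + G2 w σ ℓ aℓm))
            + ((2*((ℓ:ℝ)*w - 4*((ℓ:ℝ)-1)))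
              + (((ℓ:ℝ)*w - 4*((ℓ:ℝ)-1))*(4*((ℓ:ℝ)-1)/σ - vℓ))
              + (((ℓ:ℝ)*w - 4*((ℓ:ℝ)-1))^2/(2*σ))) := by
        field_simp
        ring
      rcases le_total (0:ℝ) ((2*((ℓ:ℝ)*w - 4*((ℓ:ℝ)-1)))
              + (((ℓ:ℝ)*w - 4*((ℓ:ℝ)-1))*(4*((ℓ:ℝ)-1)/σ - vℓ))
              + (((ℓ:ℝ)*w - 4*((ℓ:ℝ)-1))^2/(2*σ))) with hc | hc
      · rw [min_eq_left hc] at hq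
        linarith
      · rw [min_eq_right hc] at hq
        linarith
    · -- (ii) → (i)
      intro hv
      have haℓmeq := haeq hv
      have hD : 0 < 2*((ℓ:ℝ)*w - 4*((ℓ:ℝ)-1))
            + 2*(((ℓ:ℝ)*w - 4*((ℓ:ℝ)-1))*(4*((ℓ:ℝ)-1)/σ - vℓ))
            + 4*(((ℓ:ℝ)*w - 4*((ℓ:ℝ)-1))^2/(2*σ)) := by
        have hfact : 2*((ℓ:ℝ)*w - 4*((ℓ:ℝ)-1))
              + 2*(((ℓ:ℝ)*w - 4*((ℓ:ℝ)-1))*(4*((ℓ:ℝ)-1)/σ - vℓ))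
              + 4*(((ℓ:ℝ)*w - 4*((ℓ:ℝ)-1))^2/(2*σ))
            = (2*((ℓ:ℝ)*w - 4*((ℓ:ℝ)-1)))*((1 + (ℓ:ℝ)*w/σ) - vℓ) := by
          field_simp
          ring
        rw [hfact]
        exact mul_pos (by linarith) (by linarith)
      obtain ⟨r, hr0, hr1, hgr⟩ := quartic_pick _ _ _ (by positivity) hD
      have hrsq : r^2 ≤ 1 := by nlinarith
      refine ⟨4*((ℓ:ℝ)-1) + r^2*((ℓ:ℝ)*w - 4*((ℓ:ℝ)-1)),
        ⟨by nlinarith [mul_nonneg (sq_nonneg r) hΔ.le],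
         by nlinarith [mul_nonneg (by linarith : (0:ℝ) ≤ 1 - r^2) hΔ.le]⟩,
        r, ⟨hr0, hr1.le⟩, by ring, ?_⟩
      rw [haℓmeq, hG2lw]
      have hid : (((ℓ:ℝ)-1)*(8-2*r*(4-w)) + 2*r*w
            + (4*((ℓ:ℝ)-1) + r^2*((ℓ:ℝ)*w - 4*((ℓ:ℝ)-1)))^2/(2*σ))
          - ((2*((ℓ:ℝ)*w) + ((ℓ:ℝ)*w)^2/(2*σ))
            - vℓ*((ℓ:ℝ)*w - (4*((ℓ:ℝ)-1) + r^2*((ℓ:ℝ)*w - 4*((ℓ:ℝ)-1)))))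
          = ((2*((ℓ:ℝ)*w - 4*((ℓ:ℝ)-1)))*r
              + (((ℓ:ℝ)*w - 4*((ℓ:ℝ)-1))*(4*((ℓ:ℝ)-1)/σ - vℓ))*r^2
              + (((ℓ:ℝ)*w - 4*((ℓ:ℝ)-1))^2/(2*σ))*r^4)
            - ((2*((ℓ:ℝ)*w - 4*((ℓ:ℝ)-1)))
              + (((ℓ:ℝ)*w - 4*((ℓ:ℝ)-1))*(4*((ℓ:ℝ)-1)/σ - vℓ))
              + (((ℓ:ℝ)*w - 4*((ℓ:ℝ)-1))^2/(2*σ))) := by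
        field_simp
        ring
      linarith
  · constructor
    · -- (ii) → (iii)
      intro hv a ha
      obtain ⟨ha1, ha2⟩ := ha
      have haℓmeq := haeq hv
      have h := hminle _ (hAdmpred a ha1 ha2)
      have h' : -vℓ*((ℓ:ℝ)*w) + G2 w σ ℓ ((ℓ:ℝ)*w) ≤ -vℓ*a + G2 w σ (ℓ-1) a := by
        rw [← haℓmeq]
        exact h
      have hprod : ((ℓ:ℝ)*w - a)*vℓ < ((ℓ:ℝ)*w - a)*(1 + (ℓ:ℝ)*w/σ) :=
        mul_lt_mul_of_pos_left hv (by linarith : 0 < (ℓ:ℝ)*w - a)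
      nlinarith [h', hprod]
    · -- (iii) → (ii)
      intro hiii
      by_contra hv
      have hvs : 1 + (ℓ:ℝ)*w/σ ≤ vℓ := not_lt.mp hv
      have hspec := hiii a' ⟨ha'bounds.1, ha'bounds.2⟩
      have h' : -vℓ*a' + G2 w σ (ℓ-1) a' ≤ -vℓ*((ℓ:ℝ)*w) + G2 w σ ℓ ((ℓ:ℝ)*w) :=
        hminle' _ hAdmlw
      have hprod : ((ℓ:ℝ)*w - a')*(1 + (ℓ:ℝ)*w/σ) ≤ ((ℓ:ℝ)*w - a')*vℓ :=
        mul_le_mul_of_nonneg_left hvs (by linarith [ha'bounds.2] : (0:ℝ) ≤ (ℓ:ℝ)*w - a')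
      nlinarith [h', hprod, hspec]
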